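/- arXiv:1405.1541 — 3 statements merged into one kernel-verified Lean document; each statement's English description precedes it below -/
import Mathlib

section
/- Let l ≥ 1 and let f : [-l, l] → ℝ be Lipschitz continuous with |f(s)| + |f'(s)| ≤ K e^{-k|s|} for s ∈ (-l, l), for some constants K, k > 0. Then there is a constant C₂ > 0, depending only on K and k (independent of l ≥ 1), such that ‖f‖_{L^∞(-l,l)} ≤ C₂ ‖f‖_{L²(-l,l)}^{2/3}. -/
/-!
Since Lipschitz functions are absolutely continuous, the bound `|f'| ≤ K` on `(-l, l)` makes `f`
`K`-Lipschitz on `[-l, l]`. If `M = |f s|`, then `|f| ≥ M / 2` on an interval of length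
`M / (2K)` containing `s`, which fits inside `[-l, l]`; hence `∫ f² ≥ M³ / (8K)`.
-/

open MeasureTheory intervalIntegral Set
open scoped NNReal

theorem LipschitzOnWith.of_abs_deriv_le {f : ℝ → ℝ} {L C : ℝ≥0} {a b : ℝ}
    (hf : LipschitzOnWith L f (Icc a b)) (hd : ∀ x ∈ Ioo a b, |deriv f x| ≤ C) :
    LipschitzOnWith C f (Icc a b) := by
  refine LipschitzOnWith.of_dist_le_mul fun x hx y hy => ?_
  have hac : AbsolutelyContinuousOnInterval f y x :=
    (hf.mono (uIcc_subset_Icc hy hx)).absolutelyContinuousOnInterval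
  rw [Real.dist_eq, Real.dist_eq, ← hac.integral_deriv_eq_sub, ← Real.norm_eq_abs]
  refine norm_integral_le_of_norm_le_const_ae ?_
  filter_upwards [Measure.ae_ne volume b] with t htb ht
  rw [uIoc, mem_Ioc] at ht
  exact hd t ⟨(le_min hy.1 hx.1).trans_lt ht.1, (ht.2.trans (max_le hy.2 hx.2)).lt_of_ne htb⟩

theorem exists_mem_Icc_add_subset_Icc {a b r s : ℝ} (hr : 0 ≤ r) (hrb : r ≤ b - a)
    (hs : s ∈ Icc a b) : ∃ c, s ∈ Icc c (c + r) ∧ Icc c (c + r) ⊆ Icc a b := by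
  refine ⟨min s (b - r), ⟨min_le_left _ _, ?_⟩, Icc_subset_Icc ?_ ?_⟩
  all_goals grind

theorem LipschitzOnWith.abs_pow_three_le_mul_integral_sq {f : ℝ → ℝ} {K : ℝ≥0} {a b s : ℝ}
    (hK : 0 < K) (hf : LipschitzOnWith K f (Icc a b)) (hs : s ∈ Icc a b)
    (hfs : |f s| ≤ 2 * K * (b - a)) :
    |f s| ^ 3 ≤ 8 * K * ∫ x in a..b, f x ^ 2 := by
  have hK' : (0 : ℝ) < K := hK
  set r := |f s| / (2 * K) with hr
  obtain ⟨c, hsc, hcab⟩ := exists_mem_Icc_add_subset_Icc (r := r) (by positivity)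
    (by rwa [hr, div_le_iff₀' (by positivity)]) hs
  have hcr : c ≤ c + r := hsc.1.trans hsc.2
  have hlow : ∀ t ∈ Icc c (c + r), |f s| / 2 ≤ |f t| := by
    intro t ht
    have hLip := hf.dist_le_mul s (hcab hsc) t (hcab ht)
    have hst : |s - t| ≤ r :=
      abs_sub_le_iff.2 ⟨by linarith [ht.1, hsc.2], by linarith [ht.2, hsc.1]⟩
    have hKr : (K : ℝ) * r = |f s| / 2 := by rw [hr]; field_simp
    rw [Real.dist_eq, Real.dist_eq] at hLip
    linarith [abs_sub_abs_le_abs_sub (f s) (f t), mul_le_mul_of_nonneg_left hst hK'.le]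
  have hsq : ContinuousOn (fun x => f x ^ 2) (Icc a b) := hf.continuousOn.pow 2
  calc |f s| ^ 3 = 8 * K * ((|f s| / 2) ^ 2 * r) := by rw [hr]; field_simp; ring
    _ = 8 * (K : ℝ) * ∫ _ in c..c + r, (|f s| / 2) ^ 2 := by simp [mul_comm]
    _ ≤ 8 * (K : ℝ) * ∫ x in c..c + r, f x ^ 2 := by
      gcongr
      refine integral_mono_on hcr intervalIntegrable_const
        ((hsq.mono hcab).intervalIntegrable_of_Icc hcr) fun t ht => ?_
      rw [← sq_abs (f t)]
      exact pow_le_pow_left₀ (by positivity) (hlow t ht) 2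
    _ ≤ 8 * (K : ℝ) * ∫ x in a..b, f x ^ 2 := by
      gcongr
      exact integral_mono_interval (hcab ⟨le_rfl, hcr⟩).1 hcr (hcab ⟨hcr, le_rfl⟩).2
        (Filter.Eventually.of_forall fun x => sq_nonneg (f x))
        (hsq.intervalIntegrable_of_Icc (hs.1.trans hs.2))

theorem stmt4 (K k : ℝ) (hK : 0 < K) (hk : 0 < k) :
    ∃ C₂ > (0:ℝ), ∀ l : ℝ, 1 ≤ l → ∀ f : ℝ → ℝ,
      (∃ L : NNReal, LipschitzOnWith L f (Set.Icc (-l) l)) →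
      (∀ s ∈ Set.Ioo (-l) l, |f s| + |deriv f s| ≤ K * Real.exp (-k * |s|)) →
      ∀ s ∈ Set.Icc (-l) l,
        |f s| ≤ C₂ * (∫ t in (-l)..l, (f t) ^ 2) ^ ((1:ℝ)/3) := by
  refine ⟨(8 * K) ^ ((1:ℝ)/3), by positivity, ?_⟩
  rintro l hl f ⟨L, hL⟩ hbd s hs
  have hexp (x : ℝ) : K * Real.exp (-k * |x|) ≤ K :=
    mul_le_of_le_one_right hK.le <| Real.exp_le_one_iff.2 <|
      mul_nonpos_of_nonpos_of_nonneg (neg_nonpos.2 hk.le) (abs_nonneg x)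
  have hK' : (K.toNNReal : ℝ) = K := Real.coe_toNNReal K hK.le
  have hLip : LipschitzOnWith K.toNNReal f (Icc (-l) l) := hL.of_abs_deriv_le fun x hx => by
    linarith [hbd x hx, hexp x, abs_nonneg (f x)]
  have hf0 : |f 0| ≤ K := by
    linarith [hbd 0 ⟨by linarith, by linarith⟩, hexp 0, abs_nonneg (deriv f 0)]
  have hfs : |f s| ≤ 2 * K.toNNReal * (l - -l) := by
    have h := hLip.dist_le_mul s hs 0 ⟨by linarith, by linarith⟩
    rw [Real.dist_eq, Real.dist_eq, sub_zero, hK'] at h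
    rw [hK']
    nlinarith [abs_sub_abs_le_abs_sub (f s) (f 0), abs_le.2 hs]
  have hcube := hLip.abs_pow_three_le_mul_integral_sq (Real.toNNReal_pos.2 hK) hs hfs
  rw [hK'] at hcube
  have hI : 0 ≤ ∫ t in (-l)..l, f t ^ 2 := integral_nonneg (by linarith) fun _ _ => sq_nonneg _
  rw [← Real.mul_rpow (by positivity) hI, one_div,
    Real.le_rpow_inv_iff_of_pos (abs_nonneg _) (by positivity) three_pos]
  exact_mod_cast hcube
end

section
/- Let f : [a, b] → ℝ be Lipschitz with Lipschitz constant at most K, let m = max_{[a,b]} |f|, attained at s̄ ∈ [a,b]. Then |f(s)| ≥ m - K|s - s̄| for s ∈ [a,b] ∩ [s̄ - m/K, s̄ + m/K], and consequently ∫_a^b f(s)² ds ≥ m³/(3K) provided [s̄ - m/K, s̄ + m/K] ⊂ [a,b]. -/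
theorem stmt5 (f : ℝ → ℝ) (a b K m sb : ℝ) (hK : 0 < K) (hab : a ≤ b)
    (hf : LipschitzOnWith (Real.toNNReal K) f (Set.Icc a b))
    (hsb : sb ∈ Set.Icc a b) (hm : m = |f sb|)
    (hmax : ∀ s ∈ Set.Icc a b, |f s| ≤ m)
    (hsub : Set.Icc (sb - m / K) (sb + m / K) ⊆ Set.Icc a b) :
    (∀ s ∈ Set.Icc a b ∩ Set.Icc (sb - m / K) (sb + m / K),
      m - K * |s - sb| ≤ |f s|) ∧
    m ^ 3 / (3 * K) ≤ ∫ s in a..b, (f s) ^ 2 := by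
  have hm0 : 0 ≤ m := hm ▸ abs_nonneg _
  have hc0 : 0 ≤ m / K := div_nonneg hm0 hK.le
  have key : ∀ s ∈ Set.Icc a b, m - K * |s - sb| ≤ |f s| := by
    intro s hs
    have hd := hf.dist_le_mul sb hsb s hs
    rw [Real.dist_eq, Real.dist_eq, Real.coe_toNNReal K hK.le] at hd
    have h1 : |f sb| - |f s| ≤ |f sb - f s| := abs_sub_abs_le_abs_sub _ _
    have h2 : |sb - s| = |s - sb| := abs_sub_comm _ _
    rw [hm]; linarith [hd, h1, h2.symm ▸ hd]
  refine ⟨fun s hs => key s hs.1, ?_⟩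
  have hmem2 : sb + m/K ∈ Set.Icc (sb - m/K) (sb + m/K) := by constructor <;> linarith
  have ha1 : a ≤ sb := hsb.1
  have hb2 : sb + m/K ≤ b := (hsub hmem2).2
  have hsb2 : sb ≤ sb + m/K := by linarith
  have hcont : ContinuousOn (fun s => f s ^ 2) (Set.Icc a b) := hf.continuousOn.pow 2
  have hint : ∀ c d, a ≤ c → c ≤ d → d ≤ b →
      IntervalIntegrable (fun s => f s ^ 2) MeasureTheory.volume c d := by
    intro c d hac hcd hdb
    apply (hcont.mono ?_).intervalIntegrable
    rw [Set.uIcc_of_le hcd]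
    exact Set.Icc_subset_Icc hac hdb
  have i1 := hint a sb le_rfl ha1 hsb.2
  have i2 := hint sb (sb + m/K) ha1 hsb2 hb2
  have i3 := hint (sb + m/K) b (le_trans ha1 hsb2) hb2 le_rfl
  have e1 := intervalIntegral.integral_add_adjacent_intervals i1 i2
  have e2 := intervalIntegral.integral_add_adjacent_intervals (i1.trans i2) i3
  have n1 : 0 ≤ ∫ s in a..sb, f s ^ 2 :=
    intervalIntegral.integral_nonneg ha1 (fun u _ => sq_nonneg _)
  have n3 : 0 ≤ ∫ s in (sb + m/K)..b, f s ^ 2 :=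
    intervalIntegral.integral_nonneg hb2 (fun u _ => sq_nonneg _)
  have hgint : IntervalIntegrable (fun s => (m - K*(s - sb))^2) MeasureTheory.volume sb (sb + m/K) := by
    exact (by fun_prop : Continuous _).intervalIntegrable _ _
  have hmono : (∫ s in sb..(sb + m/K), (m - K*(s - sb))^2) ≤ ∫ s in sb..(sb + m/K), f s ^ 2 := by
    apply intervalIntegral.integral_mono_on hsb2 hgint i2
    intro s hs
    have hs' : s ∈ Set.Icc a b := ⟨le_trans ha1 hs.1, le_trans hs.2 hb2⟩
    have h0 : 0 ≤ m - K*(s - sb) := by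
      have : K * (s - sb) ≤ K * (m / K) := by
        apply mul_le_mul_of_nonneg_left (by linarith [hs.2]) hK.le
      rw [mul_div_cancel₀ _ hK.ne'] at this
      linarith
    have habs : |s - sb| = s - sb := abs_of_nonneg (by linarith [hs.1])
    have hle : m - K*(s - sb) ≤ |f s| := by
      have := key s hs'; rw [habs] at this; exact this
    calc (m - K*(s - sb))^2 ≤ |f s|^2 := pow_le_pow_left₀ h0 hle 2
      _ = f s ^ 2 := sq_abs _
  have hval : (∫ s in sb..(sb + m/K), (m - K*(s - sb))^2) = m^3/(3*K) := by
    have := intervalIntegral.integral_comp_sub_right (a := sb) (b := sb + m/K)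
      (fun t => (m - K*t)^2) sb
    rw [this]
    simp only [sub_self, add_sub_cancel_left]
    have hexp : ∀ t : ℝ, (m - K*t)^2 = K^2*t^2 - 2*m*K*t + m^2 := fun t => by ring
    simp_rw [hexp]
    have j1 : IntervalIntegrable (fun t : ℝ => K^2*t^2) MeasureTheory.volume 0 (m/K) := by
      exact (by fun_prop : Continuous _).intervalIntegrable _ _
    have j2 : IntervalIntegrable (fun t : ℝ => 2*m*K*t) MeasureTheory.volume 0 (m/K) := by
      exact (by fun_prop : Continuous _).intervalIntegrable _ _
    have j3 : IntervalIntegrable (fun t : ℝ => m^2) MeasureTheory.volume 0 (m/K) := by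
      exact (by fun_prop : Continuous _).intervalIntegrable _ _
    rw [intervalIntegral.integral_add (j1.sub j2) j3, intervalIntegral.integral_sub j1 j2]
    have p2 : (∫ t in (0:ℝ)..(m/K), K^2*t^2) = K^2 * ((m/K)^3/3) := by
      rw [intervalIntegral.integral_const_mul]
      have : (∫ t in (0:ℝ)..(m/K), t^2) = (m/K)^3/3 := by
        rw [integral_pow]; norm_num
      rw [this]
    have p1 : (∫ t in (0:ℝ)..(m/K), 2*m*K*t) = 2*m*K * ((m/K)^2/2) := by
      rw [intervalIntegral.integral_const_mul]
      have : (∫ t in (0:ℝ)..(m/K), t) = (m/K)^2/2 := by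
        rw [integral_id]; ring
      rw [this]
    rw [p2, p1]
    simp only [intervalIntegral.integral_const, smul_eq_mul]
    field_simp
    ring
  calc m^3/(3*K) = ∫ s in sb..(sb + m/K), (m - K*(s - sb))^2 := hval.symm
    _ ≤ ∫ s in sb..(sb + m/K), f s ^ 2 := hmono
    _ ≤ ∫ s in a..b, f s ^ 2 := by rw [← e2, ← e1]; linarith
end

section
/- Let φ be the radial solution of Δφ = c²φ in the ball B(x₀, R) ⊂ ℝⁿ with φ = q̄ > 0 on ∂B(x₀, R). Then φ(x) = ϕ(|x - x₀|, R) where ϕ(·, R) : [0, R] → ℝ is positive and strictly increasing on (0, R], with ϕ(R, R) = q̄. Moreover φ(0) ≤ q̄ e^{-k₀ R} for some constant k₀ > 0 depending only on c and n, uniformly for R ≥ R̄ > 0. -/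
/-!
At an interior maximum a C² function has nonpositive Laplacian, whereas a solution of
`Δu = c²u` has `Δu > 0` wherever `u > 0`. This gives the maximum principle: solutions are ordered
as their boundary values are, hence unique. Uniqueness makes `φ` invariant under the reflections
fixing `x₀`, so `φ` is radial.

The functions `γ ∑ᵢ cosh (c (xᵢ - x₀ᵢ))` are explicit solutions. Comparing `φ` with them gives
`φ > 0` and, since every point of the sphere has a coordinate with `|xᵢ - x₀ᵢ| ≥ R / √n`,
`φ x₀ ≤ q̄ n / (cosh (c R / √n) + n - 1)`, which is exponentially small uniformly in `R ≥ R̄`.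
Finally `Δφ = c²φ > 0`, so by the strict maximum principle on `B(x₀, ρ)` the value of `φ` inside
that ball is smaller than its (constant) value on its boundary: the profile is strictly increasing.
-/

open Metric Set Filter Topology InnerProductSpace Laplacian

theorem deriv_deriv_nonpos_of_isLocalMax {g : ℝ → ℝ} {t : ℝ} (hmax : IsLocalMax g t)
    (hg : ContinuousAt g t) : deriv (deriv g) t ≤ 0 := by
  by_contra! hpos
  have hmin := isLocalMin_of_deriv_deriv_pos hpos hmax.deriv_eq_zero hg
  have hconst : g =ᶠ[𝓝 t] fun _ => g t :=
    (hmin.and hmax).mono fun s hs => le_antisymm hs.2 hs.1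
  have hderiv : deriv g =ᶠ[𝓝 t] fun _ => 0 :=
    hconst.eventuallyEq_nhds.mono fun s hs => by rw [hs.deriv_eq, deriv_const]
  rw [hderiv.deriv_eq, deriv_const] at hpos
  exact hpos.false

section NormedSpace

variable {E F : Type*} [NormedAddCommGroup E] [NormedSpace ℝ E] [NormedAddCommGroup F]
  [NormedSpace ℝ F]

theorem deriv_deriv_comp_add_smul {f : E → F} {x : E} (hf : ContDiffAt ℝ 2 f x) (v : E) :
    deriv (deriv fun s : ℝ => f (x + s • v)) 0 = fderiv ℝ (fderiv ℝ f) x v v := by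
  have hline : ∀ s : ℝ, HasDerivAt (fun s : ℝ => x + s • v) v s := fun s => by
    simpa using ((hasDerivAt_id s).smul_const v).const_add x
  have htend : Tendsto (fun s : ℝ => x + s • v) (𝓝 0) (𝓝 x) := by
    simpa using ((hline 0).continuousAt.tendsto)
  have hfirst : deriv (fun s : ℝ => f (x + s • v)) =ᶠ[𝓝 0]
      fun s => fderiv ℝ f (x + s • v) v := by
    filter_upwards [htend.eventually (hf.eventually (by simp))] with s hs
    exact ((hs.differentiableAt (by simp)).hasFDerivAt.comp_hasDerivAt s (hline s)).deriv
  have hdf : DifferentiableAt ℝ (fderiv ℝ f) x :=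
    (hf.fderiv_right (m := 1) (by norm_num)).differentiableAt (by norm_num)
  rw [hfirst.deriv_eq]
  exact (((ContinuousLinearMap.apply ℝ F v).hasFDerivAt.comp x
    hdf.hasFDerivAt).comp_hasDerivAt_of_eq (0 : ℝ) (hline 0) (by simp)).deriv

theorem dist_add_linearIsometryEquiv_sub (A : E ≃ₗᵢ[ℝ] E) (x₀ z : E) :
    dist (x₀ + A (z - x₀)) x₀ = dist z x₀ := by
  rw [dist_eq_norm, dist_eq_norm, add_sub_cancel_left, LinearIsometryEquiv.norm_map]

end NormedSpace

section Laplacian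

variable {E F : Type*} [NormedAddCommGroup E] [InnerProductSpace ℝ E] [FiniteDimensional ℝ E]
  [NormedAddCommGroup F] [NormedSpace ℝ F]

theorem laplacian_eq_sum_fderiv_fderiv {ι : Type*} [Fintype ι] {f : E → F} {x : E}
    (hf : ContDiffAt ℝ 2 f x) (b : OrthonormalBasis ι ℝ E) :
    Δ f x = ∑ i, fderiv ℝ (fun y => fderiv ℝ f y (b i)) x (b i) := by
  have hdf : DifferentiableAt ℝ (fderiv ℝ f) x :=
    (hf.fderiv_right (m := 1) (by norm_num)).differentiableAt (by norm_num)
  have hv : ∀ v, fderiv ℝ (fun y => fderiv ℝ f y v) x v = fderiv ℝ (fderiv ℝ f) x v v :=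
    fun v => DFunLike.congr_fun
      ((ContinuousLinearMap.apply ℝ F v).hasFDerivAt.comp x hdf.hasFDerivAt).fderiv v
  simp [laplacian_eq_iteratedFDeriv_orthonormalBasis f b, iteratedFDeriv_two_apply, hv]

theorem laplacian_eq_sum_deriv_deriv {ι : Type*} [Fintype ι] {f : E → F} {x : E}
    (hf : ContDiffAt ℝ 2 f x) (b : OrthonormalBasis ι ℝ E) :
    Δ f x = ∑ i, deriv (deriv fun s : ℝ => f (x + s • b i)) 0 := by
  simp [laplacian_eq_iteratedFDeriv_orthonormalBasis f b, iteratedFDeriv_two_apply,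
    deriv_deriv_comp_add_smul hf]

theorem laplacian_nonpos_of_isLocalMax {f : E → ℝ} {x : E} (hf : ContDiffAt ℝ 2 f x)
    (hmax : IsLocalMax f x) : Δ f x ≤ 0 := by
  rw [laplacian_eq_sum_deriv_deriv hf (stdOrthonormalBasis ℝ E)]
  have hline : ∀ v : E, ContinuousAt (fun s : ℝ => x + s • v) 0 := fun v => by fun_prop
  refine Finset.sum_nonpos fun i _ => deriv_deriv_nonpos_of_isLocalMax ?_ ?_
  · exact IsLocalMax.comp_continuous (f := f) (by simpa using hmax) (hline _)
  · exact hf.continuousAt.comp_of_eq (hline _) (by simp)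

theorem laplacian_comp_linearIsometryEquiv (A : E ≃ₗᵢ[ℝ] E) (f : E → F) (x : E) :
    Δ (f ∘ A) x = Δ f (A x) := by
  have hcomp : ∀ v, iteratedFDeriv ℝ 2 (f ∘ A) x ![v, v] =
      iteratedFDeriv ℝ 2 f (A x) ![A v, A v] := by
    intro v
    have := A.toContinuousLinearEquiv.iteratedFDerivWithin_comp_right f uniqueDiffOn_univ
      (mem_univ (A x)) 2
    simp only [preimage_univ, iteratedFDerivWithin_univ] at this
    have h := congrArg (· ![v, v]) this
    simp only [ContinuousMultilinearMap.compContinuousLinearMap_apply,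
      LinearIsometryEquiv.coe_toContinuousLinearEquiv] at h
    rw [h]
    congr 1
    ext i
    fin_cases i <;> rfl
  rw [laplacian_eq_iteratedFDeriv_orthonormalBasis f ((stdOrthonormalBasis ℝ E).map A),
    laplacian_eq_iteratedFDeriv_orthonormalBasis (f ∘ A) (stdOrthonormalBasis ℝ E)]
  simp [hcomp]

theorem laplacian_comp_sub (f : E → F) (a x : E) :
    Δ (fun z => f (z - a)) x = Δ f (x - a) := by
  simp [laplacian_eq_iteratedFDeriv_stdOrthonormalBasis, iteratedFDeriv_comp_sub]

theorem laplacian_comp_add_left (f : E → F) (a x : E) :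
    Δ (fun z => f (a + z)) x = Δ f (a + x) := by
  simp [laplacian_eq_iteratedFDeriv_stdOrthonormalBasis, iteratedFDeriv_comp_add_left]

theorem laplacian_comp_linearIsometryEquiv_about (A : E ≃ₗᵢ[ℝ] E) (f : E → F) (x₀ x : E) :
    Δ (fun z => f (x₀ + A (z - x₀))) x = Δ f (x₀ + A (x - x₀)) := by
  rw [laplacian_comp_sub (fun u => f (x₀ + A u))]
  exact (laplacian_comp_linearIsometryEquiv A (fun u => f (x₀ + u)) _).trans
    (laplacian_comp_add_left f x₀ _)

end Laplacian

section MaximumPrinciple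

variable {E : Type*} [NormedAddCommGroup E] [InnerProductSpace ℝ E] [FiniteDimensional ℝ E]
  {x₀ : E} {R M : ℝ} {u : E → ℝ}

theorem laplacian_nonpos_of_isMaxOn_closedBall (hu : ContDiffOn ℝ 2 u (closedBall x₀ R))
    {x : E} (hx : x ∈ ball x₀ R) (hmax : IsMaxOn u (closedBall x₀ R) x) : Δ u x ≤ 0 :=
  laplacian_nonpos_of_isLocalMax (hu.contDiffAt (closedBall_mem_nhds_of_mem hx))
    (hmax.isLocalMax (closedBall_mem_nhds_of_mem hx))

theorem le_of_forall_sphere_le_of_laplacian_pos (hu : ContDiffOn ℝ 2 u (closedBall x₀ R))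
    (hΔ : ∀ x ∈ ball x₀ R, M < u x → 0 < Δ u x) (hM : ∀ x ∈ sphere x₀ R, u x ≤ M)
    {x : E} (hx : x ∈ closedBall x₀ R) : u x ≤ M := by
  obtain ⟨p, hp, hpmax⟩ := (isCompact_closedBall x₀ R).exists_isMaxOn ⟨x, hx⟩ hu.continuousOn
  refine (hpmax hx).trans (not_lt.1 fun hMp => ?_)
  have hpball : p ∈ ball x₀ R := by
    rcases (mem_closedBall.1 hp).lt_or_eq with h | h
    · exact h
    · exact absurd (hM p h) hMp.not_ge
  exact (hΔ p hpball hMp).not_ge (laplacian_nonpos_of_isMaxOn_closedBall hu hpball hpmax)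

theorem lt_of_forall_sphere_le_of_laplacian_pos (hu : ContDiffOn ℝ 2 u (closedBall x₀ R))
    (hΔ : ∀ x ∈ ball x₀ R, 0 < Δ u x) (hM : ∀ x ∈ sphere x₀ R, u x ≤ M)
    {x : E} (hx : x ∈ ball x₀ R) : u x < M := by
  have hle : ∀ y ∈ closedBall x₀ R, u y ≤ M := fun y hy =>
    le_of_forall_sphere_le_of_laplacian_pos hu (fun y hy _ => hΔ y hy) hM hy
  refine (hle x (ball_subset_closedBall hx)).lt_of_ne fun hxM => ?_
  have hmax : IsMaxOn u (closedBall x₀ R) x := fun y hy => hxM ▸ hle y hy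
  exact (hΔ x hx).not_ge (laplacian_nonpos_of_isMaxOn_closedBall hu hx hmax)

end MaximumPrinciple

section ScreenedPoisson

variable {E : Type*} [NormedAddCommGroup E] [InnerProductSpace ℝ E] [FiniteDimensional ℝ E]
  {c R q : ℝ} {x₀ : E} {u w : E → ℝ}

structure IsScreenedPoissonSolution (c : ℝ) (x₀ : E) (R : ℝ) (u : E → ℝ) : Prop where
  contDiffOn : ContDiffOn ℝ 2 u (closedBall x₀ R)
  laplacian_eq : ∀ x ∈ ball x₀ R, Δ u x = c ^ 2 * u x

namespace IsScreenedPoissonSolution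

theorem le_of_forall_sphere_le (hc : c ≠ 0) (hu : IsScreenedPoissonSolution c x₀ R u)
    (hw : IsScreenedPoissonSolution c x₀ R w) (h : ∀ x ∈ sphere x₀ R, u x ≤ w x)
    {x : E} (hx : x ∈ closedBall x₀ R) : u x ≤ w x := by
  refine sub_nonpos.1 (le_of_forall_sphere_le_of_laplacian_pos (u := u - w)
    (hu.contDiffOn.sub hw.contDiffOn) (fun y hy hpos => ?_)
    (fun y hy => sub_nonpos.2 (h y hy)) hx)
  rw [(hu.contDiffOn.contDiffAt (closedBall_mem_nhds_of_mem hy)).laplacian_sub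
    (hw.contDiffOn.contDiffAt (closedBall_mem_nhds_of_mem hy)), hu.laplacian_eq y hy,
    hw.laplacian_eq y hy, ← mul_sub]
  exact mul_pos (by positivity) hpos

theorem eq_of_forall_sphere_eq (hc : c ≠ 0) (hu : IsScreenedPoissonSolution c x₀ R u)
    (hw : IsScreenedPoissonSolution c x₀ R w) (h : ∀ x ∈ sphere x₀ R, u x = w x)
    {x : E} (hx : x ∈ closedBall x₀ R) : u x = w x :=
  le_antisymm (hu.le_of_forall_sphere_le hc hw (fun y hy => (h y hy).le) hx)
    (hw.le_of_forall_sphere_le hc hu (fun y hy => (h y hy).ge) hx)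

theorem comp_linearIsometryEquiv_about (hu : IsScreenedPoissonSolution c x₀ R u)
    (A : E ≃ₗᵢ[ℝ] E) : IsScreenedPoissonSolution c x₀ R (fun z => u (x₀ + A (z - x₀))) := by
  refine ⟨hu.contDiffOn.comp (by fun_prop) fun z hz => ?_, fun z hz => ?_⟩
  · rwa [mem_closedBall, dist_add_linearIsometryEquiv_sub]
  · rw [laplacian_comp_linearIsometryEquiv_about]
    exact hu.laplacian_eq _ (by rwa [mem_ball, dist_add_linearIsometryEquiv_sub])

theorem eq_of_dist_eq (hc : c ≠ 0) (hu : IsScreenedPoissonSolution c x₀ R u)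
    (hb : ∀ x ∈ sphere x₀ R, u x = q) {x y : E} (hx : x ∈ closedBall x₀ R)
    (hxy : dist x x₀ = dist y x₀) : u x = u y := by
  have hnorm : ‖y - x₀‖ = ‖x - x₀‖ := by rw [← dist_eq_norm, ← dist_eq_norm, hxy]
  let A : E ≃ₗᵢ[ℝ] E := Submodule.reflection (ℝ ∙ ((y - x₀) - (x - x₀)))ᗮ
  have hA : A (y - x₀) = x - x₀ := Submodule.reflection_sub hnorm
  have hy : y ∈ closedBall x₀ R := by rwa [mem_closedBall, ← hxy]
  have hrefl :=
    hu.eq_of_forall_sphere_eq hc (hu.comp_linearIsometryEquiv_about A) (fun z hz => ?_) hy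
  · simpa [hA] using hrefl.symm
  · rw [hb z hz, hb _ (by rwa [mem_sphere, dist_add_linearIsometryEquiv_sub])]

theorem lt_of_dist_lt (hc : c ≠ 0) (hu : IsScreenedPoissonSolution c x₀ R u)
    (hb : ∀ x ∈ sphere x₀ R, u x = q) (hpos : ∀ x ∈ ball x₀ R, 0 < u x) {x y : E}
    (hy : y ∈ closedBall x₀ R) (hxy : dist x x₀ < dist y x₀) : u x < u y := by
  have hsub : closedBall x₀ (dist y x₀) ⊆ closedBall x₀ R := closedBall_subset_closedBall hy
  refine lt_of_forall_sphere_le_of_laplacian_pos (hu.contDiffOn.mono hsub) (fun z hz => ?_)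
    (fun z hz => (hu.eq_of_dist_eq hc hb (hsub (sphere_subset_closedBall hz)) hz).le) hxy
  have hzR : z ∈ ball x₀ R := ball_subset_ball hy hz
  rw [hu.laplacian_eq z hzR]
  exact mul_pos (by positivity) (hpos z hzR)

theorem radial_profile (hc : c ≠ 0) (hu : IsScreenedPoissonSolution c x₀ R u)
    (hb : ∀ x ∈ sphere x₀ R, u x = q) (hpos : ∀ x ∈ closedBall x₀ R, 0 < u x) (hR : 0 ≤ R)
    {e : E} (he : ‖e‖ = 1) :
    (∀ x ∈ closedBall x₀ R, u x = u (x₀ + dist x x₀ • e)) ∧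
      (∀ ρ ∈ Icc 0 R, 0 < u (x₀ + ρ • e)) ∧
      StrictMonoOn (fun ρ => u (x₀ + ρ • e)) (Icc 0 R) ∧ u (x₀ + R • e) = q := by
  have hdist : ∀ ρ : ℝ, dist (x₀ + ρ • e) x₀ = |ρ| := by simp [dist_eq_norm, norm_smul, he]
  have hmem : ∀ ρ ∈ Icc 0 R, x₀ + ρ • e ∈ closedBall x₀ R :=
    fun ρ hρ => by rw [mem_closedBall, hdist, abs_of_nonneg hρ.1]; exact hρ.2
  refine ⟨fun x hx => ?_, fun ρ hρ => hpos _ (hmem ρ hρ), fun ρ₁ h₁ ρ₂ h₂ h₁₂ => ?_, hb _ ?_⟩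
  · exact hu.eq_of_dist_eq hc hb hx (by rw [hdist, abs_of_nonneg dist_nonneg])
  · refine hu.lt_of_dist_lt hc hb (fun x hx => hpos x (ball_subset_closedBall hx))
      (hmem ρ₂ h₂) ?_
    rwa [hdist, hdist, abs_of_nonneg h₁.1, abs_of_nonneg h₂.1]
  · rw [mem_sphere, hdist, abs_of_nonneg hR]

end IsScreenedPoissonSolution

end ScreenedPoisson

section Separable

variable {ι : Type*} [Fintype ι] [DecidableEq ι]

theorem laplacian_sum_comp_apply {g : ℝ → ℝ} (hg : ContDiff ℝ 2 g) (x : EuclideanSpace ℝ ι) :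
    Δ (fun y : EuclideanSpace ℝ ι => ∑ i, g (y i)) x = ∑ i, deriv (deriv g) (x i) := by
  have hC2 : ContDiff ℝ 2 fun y : EuclideanSpace ℝ ι => ∑ i, g (y i) :=
    ContDiff.sum fun i _ => hg.comp (by fun_prop)
  rw [laplacian_eq_sum_deriv_deriv hC2.contDiffAt (EuclideanSpace.basisFun ι ℝ)]
  refine Finset.sum_congr rfl fun j _ => ?_
  have hline : (fun s : ℝ => ∑ i, g ((x + s • EuclideanSpace.basisFun ι ℝ j) i)) =
      fun s => g (x j + s) + ∑ i ∈ Finset.univ.erase j, g (x i) := by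
    funext s
    rw [← Finset.add_sum_erase _ _ (Finset.mem_univ j)]
    congr 1
    · simp
    · exact Finset.sum_congr rfl fun i hi => by simp [Finset.ne_of_mem_erase hi]
  have hshift : deriv (fun s => g (x j + s)) = fun s => deriv g (x j + s) :=
    funext fun s => deriv_comp_const_add g (x j) s
  simp only [hline, deriv_add_const', hshift, deriv_comp_const_add, add_zero]

end Separable

theorem deriv_deriv_cosh_mul (c t : ℝ) :
    deriv (deriv fun t => Real.cosh (c * t)) t = c ^ 2 * Real.cosh (c * t) := by
  have h : deriv (fun t => Real.cosh (c * t)) = fun t => c * Real.sinh (c * t) :=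
    funext fun t => by simp [deriv_comp_mul_left, Real.deriv_cosh]
  simp [h, deriv_comp_mul_left, Real.deriv_sinh, sq, mul_assoc]

noncomputable def coshBarrier {ι : Type*} [Fintype ι] (c : ℝ) (x₀ z : EuclideanSpace ℝ ι) : ℝ :=
  ∑ i, Real.cosh (c * (z i - x₀ i))

section Barrier

variable {ι : Type*} [Fintype ι] {c R : ℝ} {x₀ z : EuclideanSpace ℝ ι}

theorem isScreenedPoissonSolution_const_mul_coshBarrier [DecidableEq ι] (γ : ℝ) :
    IsScreenedPoissonSolution c x₀ R fun z => γ * coshBarrier c x₀ z := by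
  set g : EuclideanSpace ℝ ι → ℝ := fun y => ∑ i, γ * Real.cosh (c * y i)
  have hshift : (fun z => γ * coshBarrier c x₀ z) = fun z => g (z - x₀) := by
    funext z
    simp [g, coshBarrier, Finset.mul_sum]
  refine ⟨by unfold coshBarrier; fun_prop, fun z _ => ?_⟩
  rw [hshift, laplacian_comp_sub g,
    laplacian_sum_comp_apply (g := fun t => γ * Real.cosh (c * t)) (by fun_prop)]
  simp [deriv_deriv_cosh_mul, coshBarrier, Finset.mul_sum, mul_left_comm]

theorem coshBarrier_self : coshBarrier c x₀ x₀ = Fintype.card ι := by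
  simp [coshBarrier]

theorem coshBarrier_pos [Nonempty ι] : 0 < coshBarrier c x₀ z :=
  Finset.sum_pos (fun _ _ => Real.cosh_pos _) Finset.univ_nonempty

theorem coshBarrier_le (hz : z ∈ closedBall x₀ R) :
    coshBarrier c x₀ z ≤ Fintype.card ι * Real.cosh (c * R) := by
  have hR : dist z x₀ ≤ R := hz
  have hcoord : ∀ i, |z i - x₀ i| ≤ |R| := fun i => calc
    |z i - x₀ i| = ‖(z - x₀) i‖ := by simp [Real.norm_eq_abs]
    _ ≤ ‖z - x₀‖ := PiLp.norm_apply_le _ i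
    _ ≤ |R| := (dist_eq_norm z x₀ ▸ hR).trans (le_abs_self R)
  calc coshBarrier c x₀ z ≤ ∑ _i : ι, Real.cosh (c * R) :=
        Finset.sum_le_sum fun i _ => Real.cosh_le_cosh.2 <| by
          rw [abs_mul, abs_mul]; exact mul_le_mul_of_nonneg_left (hcoord i) (abs_nonneg c)
    _ = Fintype.card ι * Real.cosh (c * R) := by simp

theorem cosh_add_card_sub_one_le_coshBarrier [Nonempty ι] (hz : z ∈ sphere x₀ R) :
    Real.cosh (c * R / √(Fintype.card ι)) + Fintype.card ι - 1 ≤ coshBarrier c x₀ z := by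
  have hcard : (0 : ℝ) < Fintype.card ι := by exact_mod_cast Fintype.card_pos
  obtain ⟨i, -, hi⟩ : ∃ i ∈ Finset.univ, R ^ 2 / Fintype.card ι ≤ (z i - x₀ i) ^ 2 := by
    refine Finset.exists_le_of_sum_le Finset.univ_nonempty (le_of_eq ?_)
    have hnorm : ‖z - x₀‖ = R := by rw [← dist_eq_norm]; exact hz
    rw [Finset.sum_const, Finset.card_univ, nsmul_eq_mul, mul_div_cancel₀ _ hcard.ne', ← hnorm,
      EuclideanSpace.real_norm_sq_eq]
    simp
  have hcosh : Real.cosh (c * R / √(Fintype.card ι)) ≤ Real.cosh (c * (z i - x₀ i)) := by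
    refine Real.cosh_le_cosh.2 (sq_le_sq.1 ?_)
    rw [div_pow, Real.sq_sqrt hcard.le, mul_pow, mul_pow, mul_div_assoc]
    exact mul_le_mul_of_nonneg_left hi (sq_nonneg c)
  have hsum : Real.cosh (c * (z i - x₀ i)) - 1 ≤ ∑ j, (Real.cosh (c * (z j - x₀ j)) - 1) :=
    Finset.single_le_sum (f := fun j => Real.cosh (c * (z j - x₀ j)) - 1)
      (fun j _ => sub_nonneg.2 (Real.one_le_cosh _)) (Finset.mem_univ i)
  rw [Finset.sum_sub_distrib] at hsum
  simp only [Finset.sum_const, Finset.card_univ, nsmul_eq_mul, mul_one] at hsum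
  unfold coshBarrier
  linarith

end Barrier

namespace IsScreenedPoissonSolution

variable {ι : Type*} [Fintype ι] [DecidableEq ι] [Nonempty ι] {c R q : ℝ}
  {x₀ : EuclideanSpace ℝ ι} {u : EuclideanSpace ℝ ι → ℝ}

theorem pos_of_forall_sphere_eq (hc : c ≠ 0) (hq : 0 < q)
    (hu : IsScreenedPoissonSolution c x₀ R u) (hb : ∀ x ∈ sphere x₀ R, u x = q)
    {x : EuclideanSpace ℝ ι} (hx : x ∈ closedBall x₀ R) : 0 < u x := by
  have hγ : 0 < q / (Fintype.card ι * Real.cosh (c * R)) := by positivity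
  refine (mul_pos hγ coshBarrier_pos).trans_le
    ((isScreenedPoissonSolution_const_mul_coshBarrier _).le_of_forall_sphere_le hc hu
      (fun z hz => ?_) hx)
  rw [hb z hz]
  calc _ ≤ q / (Fintype.card ι * Real.cosh (c * R)) * (Fintype.card ι * Real.cosh (c * R)) :=
        mul_le_mul_of_nonneg_left (coshBarrier_le (sphere_subset_closedBall hz)) hγ.le
    _ = q := div_mul_cancel₀ q (by positivity)

theorem apply_center_le (hc : c ≠ 0) (hq : 0 ≤ q) (hR : 0 ≤ R)
    (hu : IsScreenedPoissonSolution c x₀ R u) (hb : ∀ x ∈ sphere x₀ R, u x = q) :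
    u x₀ ≤
      q * Fintype.card ι / (Real.cosh (c * R / √(Fintype.card ι)) + Fintype.card ι - 1) := by
  set D := Real.cosh (c * R / √(Fintype.card ι)) + Fintype.card ι - 1
  have hD : 0 < D := by
    have : (1 : ℝ) ≤ Fintype.card ι := by exact_mod_cast Fintype.card_pos
    linarith [Real.one_le_cosh (c * R / √(Fintype.card ι))]
  have hcenter := hu.le_of_forall_sphere_le hc
    (isScreenedPoissonSolution_const_mul_coshBarrier (q / D)) (fun z hz => ?_)
    (mem_closedBall_self hR)
  · rwa [coshBarrier_self, div_mul_eq_mul_div] at hcenter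
  · rw [hb z hz]
    calc q = q / D * D := (div_mul_cancel₀ q hD.ne').symm
      _ ≤ q / D * coshBarrier c x₀ z :=
        mul_le_mul_of_nonneg_left (cosh_add_card_sub_one_le_coshBarrier hz) (by positivity)

end IsScreenedPoissonSolution

/-- Convexity of `exp` gives `exp (θ s) ≤ 1 + θ (eˢ - 1)`, and `cosh s - 1 = (1 - e⁻ˢ) (eˢ - 1) / 2`
where `1 - e⁻ˢ ≥ 1 - e⁻ˢ⁰ = 2 N θ`. -/
theorem mul_exp_le_cosh_add_sub_one {N s₀ s : ℝ} (hN : 1 ≤ N) (hs₀ : 0 ≤ s₀) (hs : s₀ ≤ s) :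
    N * Real.exp ((1 - Real.exp (-s₀)) / (2 * N) * s) ≤ Real.cosh s + N - 1 := by
  set θ := (1 - Real.exp (-s₀)) / (2 * N)
  have hθ0 : 0 ≤ θ :=
    div_nonneg (sub_nonneg.2 (Real.exp_le_one_iff.2 (by linarith))) (by linarith)
  have hθ1 : θ ≤ 1 := by
    rw [div_le_one (by linarith)]
    linarith [Real.exp_pos (-s₀)]
  have hconv : Real.exp (θ * s) ≤ θ * Real.exp s + (1 - θ) := by
    simpa using convexOn_exp.2 (mem_univ s) (mem_univ 0) hθ0 (sub_nonneg.2 hθ1) (by ring)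
  have hmono : Real.exp (-s) ≤ Real.exp (-s₀) := Real.exp_le_exp.2 (by linarith)
  have hexp : 1 ≤ Real.exp s := Real.one_le_exp (by linarith)
  have hinv : Real.exp s * Real.exp (-s) = 1 := by
    rw [← Real.exp_add, add_neg_cancel, Real.exp_zero]
  calc N * Real.exp (θ * s) ≤ N + N * θ * (Real.exp s - 1) := by nlinarith
    _ = N + (1 - Real.exp (-s₀)) * (Real.exp s - 1) / 2 := by
        simp only [θ]; field_simp
    _ ≤ N + (1 - Real.exp (-s)) * (Real.exp s - 1) / 2 := by gcongr
    _ = Real.cosh s + N - 1 := by rw [Real.cosh_eq]; linear_combination (-1 / 2 : ℝ) * hinv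

theorem exists_pos_forall_div_cosh_le_exp {a r N : ℝ} (ha : 0 < a) (hr : 0 < r) (hN : 1 ≤ N) :
    ∃ k > 0, ∀ R ≥ r, N / (Real.cosh (a * R) + N - 1) ≤ Real.exp (-k * R) := by
  set θ := (1 - Real.exp (-(a * r))) / (2 * N)
  have hθ : 0 < θ := div_pos (sub_pos.2 (Real.exp_lt_one_iff.2 (by nlinarith))) (by linarith)
  refine ⟨a * θ, mul_pos ha hθ, fun R hR => ?_⟩
  have hmain : N * Real.exp (θ * (a * R)) ≤ Real.cosh (a * R) + N - 1 :=
    mul_exp_le_cosh_add_sub_one hN (mul_pos ha hr).le (mul_le_mul_of_nonneg_left hR ha.le)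
  rw [show -(a * θ) * R = -(θ * (a * R)) by ring, Real.exp_neg]
  calc N / (Real.cosh (a * R) + N - 1) ≤ N / (N * Real.exp (θ * (a * R))) :=
        div_le_div_of_nonneg_left (by positivity) (by positivity) hmain
    _ = (Real.exp (θ * (a * R)))⁻¹ := by field_simp

theorem stmt14 (n : ℕ) (hn : 1 ≤ n) (c qb Rbar : ℝ)
    (hc : 0 < c) (hqb : 0 < qb) (hRbar : 0 < Rbar) :
    ∃ k₀ > (0:ℝ), ∀ R : ℝ, Rbar ≤ R →
      ∀ x₀ : EuclideanSpace ℝ (Fin n), ∀ φ : EuclideanSpace ℝ (Fin n) → ℝ,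
      ContDiffOn ℝ 2 φ (Metric.closedBall x₀ R) →
      (∀ x ∈ Metric.ball x₀ R,
        (∑ i : Fin n, fderiv ℝ (fun y => fderiv ℝ φ y (EuclideanSpace.single i 1)) x
          (EuclideanSpace.single i 1)) = c ^ 2 * φ x) →
      (∀ x ∈ Metric.sphere x₀ R, φ x = qb) →
      ∃ ϕ : ℝ → ℝ,
        (∀ x ∈ Metric.closedBall x₀ R, φ x = ϕ (dist x x₀)) ∧
        (∀ ρ ∈ Set.Icc (0:ℝ) R, 0 < ϕ ρ) ∧
        StrictMonoOn ϕ (Set.Ioc (0:ℝ) R) ∧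
        ϕ R = qb ∧
        φ x₀ ≤ qb * Real.exp (-k₀ * R) := by
  have : Nonempty (Fin n) := ⟨⟨0, hn⟩⟩
  obtain ⟨k₀, hk₀, hdecay⟩ := exists_pos_forall_div_cosh_le_exp (a := c / √n) (by positivity)
    hRbar (by exact_mod_cast hn : (1 : ℝ) ≤ n)
  refine ⟨k₀, hk₀, fun R hR x₀ φ hφ hΔ hbd => ?_⟩
  have hRpos : 0 < R := hRbar.trans_le hR
  have hu : IsScreenedPoissonSolution c x₀ R φ := ⟨hφ, fun x hx => by
    rw [laplacian_eq_sum_fderiv_fderiv (hφ.contDiffAt (closedBall_mem_nhds_of_mem hx))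
      (EuclideanSpace.basisFun _ ℝ)]
    simpa using hΔ x hx⟩
  obtain ⟨hrad, hpos, hmono, hbdry⟩ := hu.radial_profile hc.ne' hbd
    (fun x hx => hu.pos_of_forall_sphere_eq hc.ne' hqb hbd hx) hRpos.le
    (e := EuclideanSpace.single ⟨0, hn⟩ 1) (by simp)
  refine ⟨_, hrad, hpos, hmono.mono Ioc_subset_Icc_self, hbdry, ?_⟩
  calc φ x₀ ≤ qb * (n / (Real.cosh (c / √n * R) + n - 1)) := by
        simpa [mul_div_assoc, div_mul_eq_mul_div] using
          hu.apply_center_le hc.ne' hqb.le hRpos.le hbd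
    _ ≤ qb * Real.exp (-k₀ * R) := mul_le_mul_of_nonneg_left (hdecay R hR) hqb.le
end
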